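/- If U is a nonzero simple left A_N-module, then y·U = 0, U is one-dimensional over ℂ, and there exists a scalar μ ∈ ℂ such that x·u = μ·u for all u ∈ U. -/

import Mathlib

/-- The generator `x` in the free algebra on two generators. -/
noncomputable def Xgen : FreeAlgebra ℂ (Fin 2) := FreeAlgebra.ι ℂ 0

/-- The generator `y` in the free algebra on two generators. -/
noncomputable def Ygen : FreeAlgebra ℂ (Fin 2) := FreeAlgebra.ι ℂ 1

/-- The defining relations of the algebra `A_N`: `y·y = 0`, `y·x = -N·y`, `x·y = N·y`. -/
inductive relN (N : ℕ) : FreeAlgebra ℂ (Fin 2) → FreeAlgebra ℂ (Fin 2) → Prop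
  | yy : relN N (Ygen * Ygen) 0
  | yx : relN N (Ygen * Xgen) ((-(N : ℂ)) • Ygen)
  | xy : relN N (Xgen * Ygen) ((N : ℂ) • Ygen)

/-- The algebra `A_N`: the quotient of the free associative unital `ℂ`-algebra on `x, y`
by the two-sided ideal generated by `y·y`, `y·x + N·y`, `x·y − N·y`. -/
noncomputable abbrev AN (N : ℕ) := RingQuot (relN N)

/-- The image of the generator `x` in `A_N`. -/
noncomputable def xN (N : ℕ) : AN N := RingQuot.mkAlgHom ℂ (relN N) Xgen

/-- The image of the generator `y` in `A_N`. -/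
noncomputable def yN (N : ℕ) : AN N := RingQuot.mkAlgHom ℂ (relN N) Ygen


lemma yy0 (N : ℕ) : yN N * yN N = 0 := by
  have := RingQuot.mkAlgHom_rel ℂ (relN.yy (N := N))
  simpa [yN, map_mul] using this

lemma xyrel (N : ℕ) : xN N * yN N = algebraMap ℂ (AN N) (N : ℂ) * yN N := by
  have := RingQuot.mkAlgHom_rel ℂ (relN.xy (N := N))
  simpa [xN, yN, map_mul, map_smul, Algebra.smul_def] using this

lemma yxrel (N : ℕ) : yN N * xN N = algebraMap ℂ (AN N) (-(N : ℂ)) * yN N := by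
  have := RingQuot.mkAlgHom_rel ℂ (relN.yx (N := N))
  rw [map_mul, map_smul, Algebra.smul_def] at this
  exact this

lemma mul_y (N : ℕ) (a : AN N) : ∃ c : ℂ, a * yN N = algebraMap ℂ (AN N) c * yN N := by
  obtain ⟨z, rfl⟩ := RingQuot.mkAlgHom_surjective ℂ (relN N) a
  induction z using FreeAlgebra.induction with
  | grade0 r => exact ⟨r, by rw [AlgHom.commutes]⟩
  | grade1 i =>
    fin_cases i
    · exact ⟨(N : ℂ), xyrel N⟩
    · exact ⟨0, by rw [map_zero, zero_mul]; exact yy0 N⟩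
  | mul a b ha hb =>
    obtain ⟨ca, ha⟩ := ha
    obtain ⟨cb, hb⟩ := hb
    refine ⟨cb * ca, ?_⟩
    rw [map_mul, mul_assoc, hb, ← mul_assoc, ← Algebra.commutes cb, mul_assoc, ha,
      ← mul_assoc, ← map_mul]
  | add a b ha hb =>
    obtain ⟨ca, ha⟩ := ha
    obtain ⟨cb, hb⟩ := hb
    exact ⟨ca + cb, by rw [map_add, add_mul, ha, hb, map_add, add_mul]⟩

open Polynomial

section
variable {N : ℕ} {U : Type} [AddCommGroup U] [Module (AN N) U]

lemma part1 [IsSimpleModule (AN N) U] : ∀ u : U, yN N • u = 0 := by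
  set Sy : Submodule (AN N) U :=
    { carrier := {u | ∃ v : U, u = yN N • v}
      add_mem' := by rintro a b ⟨v, rfl⟩ ⟨w, rfl⟩; exact ⟨v + w, (smul_add _ _ _).symm⟩
      zero_mem' := ⟨0, (smul_zero _).symm⟩
      smul_mem' := by
        rintro a u ⟨v, rfl⟩
        obtain ⟨c, hc⟩ := mul_y N a
        refine ⟨algebraMap ℂ (AN N) c • v, ?_⟩
        rw [← mul_smul, hc, Algebra.commutes, mul_smul] } with hSy
  rcases eq_bot_or_eq_top Sy with h | h
  · intro u
    have : yN N • u ∈ Sy := ⟨u, rfl⟩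
    rw [h] at this
    simpa using this
  · intro u
    have : u ∈ Sy := by rw [h]; trivial
    obtain ⟨v, rfl⟩ := this
    rw [← mul_smul, yy0, zero_smul]

lemma actPoly (hy : ∀ u : U, yN N • u = 0) (a : AN N) :
    ∃ p : Polynomial ℂ, ∀ u : U, a • u = aeval (xN N) p • u := by
  obtain ⟨z, rfl⟩ := RingQuot.mkAlgHom_surjective ℂ (relN N) a
  induction z using FreeAlgebra.induction with
  | grade0 r => exact ⟨C r, fun u => by rw [AlgHom.commutes, aeval_C]⟩
  | grade1 i =>
    fin_cases i
    · exact ⟨X, fun u => by rw [aeval_X]; rfl⟩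
    · refine ⟨0, fun u => ?_⟩
      rw [map_zero, zero_smul]
      exact hy u
  | mul a b ha hb =>
    obtain ⟨p, hp⟩ := ha
    obtain ⟨q, hq⟩ := hb
    refine ⟨p * q, fun u => ?_⟩
    rw [map_mul, mul_smul, hq u, hp (aeval (xN N) q • u), ← mul_smul, ← map_mul]
  | add a b ha hb =>
    obtain ⟨p, hp⟩ := ha
    obtain ⟨q, hq⟩ := hb
    refine ⟨p + q, fun u => ?_⟩
    rw [map_add, add_smul, hp u, hq u, map_add, add_smul]

/-- The kernel of the action of `aeval x r`, as a submodule. -/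
def kerP (hy : ∀ u : U, yN N • u = 0) (r : Polynomial ℂ) : Submodule (AN N) U where
  carrier := {u | aeval (xN N) r • u = 0}
  add_mem' := by
    intro a b ha hb
    simp only [Set.mem_setOf_eq] at *
    rw [smul_add, ha, hb, add_zero]
  zero_mem' := smul_zero _
  smul_mem' := by
    intro a u hu
    simp only [Set.mem_setOf_eq] at *
    obtain ⟨p, hp⟩ := actPoly hy a
    rw [hp u, ← mul_smul, ← map_mul, mul_comm, map_mul, mul_smul, hu, smul_zero]

lemma ann [Nontrivial U] [IsSimpleModule (AN N) U] (hy : ∀ u : U, yN N • u = 0) :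
    ∃ p : Polynomial ℂ, p ≠ 0 ∧ ∀ u : U, aeval (xN N) p • u = 0 := by
  obtain ⟨u₀, hu₀⟩ := exists_ne (0 : U)
  by_cases hfree : ∀ p : Polynomial ℂ, aeval (xN N) p • u₀ = 0 → p = 0
  · exfalso
    set W : Submodule (AN N) U :=
      { carrier := {u | ∃ p : Polynomial ℂ, u = aeval (xN N) (X * p) • u₀}
        add_mem' := by
          rintro a b ⟨p, rfl⟩ ⟨q, rfl⟩
          exact ⟨p + q, by rw [mul_add, map_add, add_smul]⟩
        zero_mem' := ⟨0, by rw [mul_zero, map_zero, zero_smul]⟩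
        smul_mem' := by
          rintro a u ⟨p, rfl⟩
          obtain ⟨q, hq⟩ := actPoly hy a
          exact ⟨q * p, by rw [hq, ← mul_smul, ← map_mul, mul_left_comm]⟩ } with hW
    rcases eq_bot_or_eq_top W with h | h
    · have hx0 : xN N • u₀ ∈ W := ⟨1, by rw [mul_one, aeval_X]⟩
      rw [h] at hx0
      have : xN N • u₀ = 0 := hx0
      have hX : (X : Polynomial ℂ) = 0 := hfree X (by rw [aeval_X]; exact this)
      exact X_ne_zero hX
    · have hu : u₀ ∈ W := by rw [h]; trivial
      obtain ⟨p, hp⟩ := hu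
      have h0 : aeval (xN N) (1 - X * p) • u₀ = 0 := by
        rw [map_sub, sub_smul, map_one, one_smul, ← hp, sub_self]
      have h1 := hfree _ h0
      have h2 := congrArg (Polynomial.eval 0) h1
      simp at h2
  · push_neg at hfree
    obtain ⟨p, hp0, hpne⟩ := hfree
    refine ⟨p, hpne, ?_⟩
    rcases eq_bot_or_eq_top (kerP hy p) with h | h
    · exfalso
      have : u₀ ∈ kerP hy p := hp0
      rw [h] at this
      exact hu₀ this
    · intro u
      have : u ∈ kerP hy p := by rw [h]; trivial
      exact this

lemma peel (hy : ∀ u : U, yN N • u = 0) :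
    ∀ (n : ℕ) (p : Polynomial ℂ), p ≠ 0 → p.natDegree ≤ n → ∀ u : U, u ≠ 0 →
      aeval (xN N) p • u = 0 →
      ∃ μ : ℂ, ∃ v : U, v ≠ 0 ∧ xN N • v = algebraMap ℂ (AN N) μ • v := by
  intro n
  induction n with
  | zero =>
    intro p hp0 hdeg u hu h
    exfalso
    have hc : p = C (p.coeff 0) := Polynomial.eq_C_of_natDegree_eq_zero (Nat.le_zero.mp hdeg)
    have hcne : p.coeff 0 ≠ 0 := fun hz => hp0 (by rw [hc, hz, map_zero])
    rw [hc, aeval_C] at h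
    have h2 : (algebraMap ℂ (AN N) (p.coeff 0)⁻¹ * algebraMap ℂ (AN N) (p.coeff 0)) • u = 0 := by
      rw [mul_smul, h, smul_zero]
    rw [← map_mul, inv_mul_cancel₀ hcne, map_one, one_smul] at h2
    exact hu h2
  | succ n ih =>
    intro p hp0 hdeg u hu h
    by_cases hdeg0 : p.natDegree = 0
    · exfalso
      have hc : p = C (p.coeff 0) := Polynomial.eq_C_of_natDegree_eq_zero hdeg0
      have hcne : p.coeff 0 ≠ 0 := fun hz => hp0 (by rw [hc, hz, map_zero])
      rw [hc, aeval_C] at h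
      have h2 : (algebraMap ℂ (AN N) (p.coeff 0)⁻¹ * algebraMap ℂ (AN N) (p.coeff 0)) • u = 0 := by
        rw [mul_smul, h, smul_zero]
      rw [← map_mul, inv_mul_cancel₀ hcne, map_one, one_smul] at h2
      exact hu h2
    · obtain ⟨μ, hroot⟩ := Complex.exists_root
        (Polynomial.natDegree_pos_iff_degree_pos.mp (Nat.pos_of_ne_zero hdeg0))
      obtain ⟨q, hq⟩ := Polynomial.dvd_iff_isRoot.mpr hroot
      have hq0 : q ≠ 0 := by rintro rfl; rw [mul_zero] at hq; exact hp0 hq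
      have hqdeg : q.natDegree ≤ n := by
        have := Polynomial.natDegree_mul (Polynomial.X_sub_C_ne_zero μ) hq0
        rw [← hq, Polynomial.natDegree_X_sub_C] at this
        omega
      by_cases hv : aeval (xN N) q • u = 0
      · exact ih q hq0 hqdeg u hu hv
      · refine ⟨μ, aeval (xN N) q • u, hv, ?_⟩
        have h3 : aeval (xN N) (X - C μ) • (aeval (xN N) q • u) = 0 := by
          rw [← mul_smul, ← map_mul, ← hq, h]
        rw [map_sub, aeval_X, aeval_C, sub_smul] at h3
        exact sub_eq_zero.mp h3

lemma hxscalar [Nontrivial U] [IsSimpleModule (AN N) U] (hy : ∀ u : U, yN N • u = 0) :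
    ∃ μ : ℂ, ∀ u : U, xN N • u = algebraMap ℂ (AN N) μ • u := by
  obtain ⟨u₀, hu₀⟩ := exists_ne (0 : U)
  obtain ⟨p, hp0, hann⟩ := ann hy
  obtain ⟨μ, v, hv, hxv⟩ := peel hy p.natDegree p hp0 le_rfl u₀ hu₀ (hann u₀)
  refine ⟨μ, ?_⟩
  have hvmem : v ∈ kerP hy (X - C μ) := by
    show aeval (xN N) (X - C μ) • v = 0
    rw [map_sub, aeval_X, aeval_C, sub_smul, hxv, sub_self]
  rcases eq_bot_or_eq_top (kerP hy (X - C μ)) with h | h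
  · exfalso; rw [h] at hvmem; exact hv hvmem
  · intro u
    have hmem : u ∈ kerP hy (X - C μ) := by rw [h]; trivial
    have : aeval (xN N) (X - C μ) • u = 0 := hmem
    rw [map_sub, aeval_X, aeval_C, sub_smul] at this
    exact sub_eq_zero.mp this

lemma evalAct {μ : ℂ} (hx : ∀ u : U, xN N • u = algebraMap ℂ (AN N) μ • u)
    (p : Polynomial ℂ) : ∀ u : U,
    aeval (xN N) p • u = algebraMap ℂ (AN N) (p.eval μ) • u := by
  induction p using Polynomial.induction_on with
  | C c => intro u; rw [aeval_C, eval_C]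
  | add p q hp hq =>
    intro u
    rw [map_add, add_smul, hp u, hq u, eval_add, map_add, add_smul]
  | monomial n c ih =>
    intro u
    have hrw : (C c * X ^ (n + 1) : Polynomial ℂ) = C c * X ^ n * X := by ring
    rw [hrw, map_mul, aeval_X, mul_smul, hx u, ih, ← mul_smul, ← map_mul]
    simp [eval_mul]

end

/-- if `U` is a nonzero simple left `A_N`-module, then `y·U = 0`,
`U` is one-dimensional over `ℂ`, and `x` acts on `U` by a scalar `μ ∈ ℂ`. -/
theorem stmt1 (N : ℕ) (hN : 0 < N) (U : Type) [AddCommGroup U] [Module (AN N) U]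
    [Nontrivial U] [IsSimpleModule (AN N) U] :
    (∀ u : U, yN N • u = 0) ∧
    (∃ u₀ : U, u₀ ≠ 0 ∧ ∀ u : U, ∃ c : ℂ, u = algebraMap ℂ (AN N) c • u₀) ∧
    (∃ μ : ℂ, ∀ u : U, xN N • u = algebraMap ℂ (AN N) μ • u) := by
  have hy : ∀ u : U, yN N • u = 0 := part1
  obtain ⟨μ, hx⟩ := hxscalar hy
  refine ⟨hy, ?_, ⟨μ, hx⟩⟩
  obtain ⟨u₀, hu₀⟩ := exists_ne (0 : U)
  refine ⟨u₀, hu₀, fun u => ?_⟩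
  have hspan : Submodule.span (AN N) {u₀} = ⊤ := by
    rcases eq_bot_or_eq_top (Submodule.span (AN N) {u₀}) with h | h
    · exact absurd (Submodule.span_singleton_eq_bot.mp h) hu₀
    · exact h
  have hu : u ∈ Submodule.span (AN N) {u₀} := by rw [hspan]; trivial
  obtain ⟨a, ha⟩ := Submodule.mem_span_singleton.mp hu
  obtain ⟨p, hp⟩ := actPoly hy a
  exact ⟨p.eval μ, by rw [← ha, hp, evalAct hx]⟩
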